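/- Let δ > −1 and let ₂F₁E_{(α,β)}(a₁,a₂;b₁;u) = Σ_{r=0}^∞ (a₁)_r (a₂)_r u^r / ((b₁)_r Γ(αr+β)) with α, β > 0. Then for 0 < x < 1, ∫₀^x u^δ · ₂F₁E_{(α,β)}(a₁,a₂;b₁;u) du = (x^{δ+1}/(δ+1)) · Σ_{r=0}^∞ (a₁)_r (a₂)_r (δ+1)_r x^r / ((b₁)_r (δ+2)_r Γ(αr+β)), i.e. an antiderivative of u^δ ₂F₁E_{(α,β)}(a₁,a₂;b₁;u) on (0,1) is (u^{δ+1}/(δ+1)) ₃F₂E_{(α,β)}(a₁,a₂,δ+1; b₁,δ+2; u). -/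

import Mathlib

/-!
Write the series as `∑ cᵣ uʳ`. When `∑ |cᵣ| xʳ` converges, integrating `u^δ ∑ cᵣ uʳ` term by term
gives `x^(δ+1) ∑ cᵣ xʳ / (δ+1+r)`, and `(δ+1)ᵣ / (δ+2)ᵣ = (δ+1) / (δ+1+r)` turns this into the
`₃F₂E` series. By the ratio test, with `y Γ(y) ≤ Γ(y+α)` for `α ≥ 1` and the log-convexity bound
`Γ(y+α) ≤ y^α Γ(y)` for `α < 1`, the series converges absolutely on `[0, 1)` when `α ≥ 1` or when it
terminates, and otherwise diverges at every `u > 0`. In the divergent case both sides are `0`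
(the value of a divergent `tsum`): convergence of the integrated series at `x` would force
convergence of `∑ cᵣ uʳ` for `u < x`.
-/

open Real

noncomputable def poch (a : ℝ) (r : ℕ) : ℝ := (ascPochhammer ℝ r).eval a

open Filter Topology MeasureTheory

lemma poch_succ (a : ℝ) (r : ℕ) : poch a (r + 1) = poch a r * (a + r) :=
  ascPochhammer_succ_eval r a

lemma poch_mul_add (a : ℝ) (r : ℕ) : poch a r * (a + r) = a * poch (a + 1) r := by
  rw [← poch_succ, poch, ascPochhammer_succ_left, Polynomial.eval_mul, Polynomial.eval_comp]
  simp [poch]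

lemma poch_div_poch_add_one {a : ℝ} (ha : 0 < a) (r : ℕ) :
    poch a r / poch (a + 1) r = a / (a + r) := by
  have hpos : 0 < poch (a + 1) r := ascPochhammer_pos r _ (by linarith)
  rw [div_eq_div_iff hpos.ne' (by positivity), poch_mul_add]

lemma tendsto_add_div_add (a b p : ℝ) {q : ℝ} (hq : q ≠ 0) :
    Tendsto (fun r : ℕ => (a + p * r) / (b + q * r)) atTop (𝓝 (p / q)) := by
  have h : Tendsto (fun r : ℕ => (a / r + p) / (b / r + q)) atTop (𝓝 ((0 + p) / (0 + q))) :=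
    ((tendsto_const_div_atTop_nhds_zero_nat a).add_const p).div
      ((tendsto_const_div_atTop_nhds_zero_nat b).add_const q) (by simpa using hq)
  rw [zero_add, zero_add] at h
  refine h.congr' ?_
  filter_upwards [eventually_ge_atTop 1] with r hr
  have : (r : ℝ) ≠ 0 := by positivity
  field_simp

lemma tendsto_mul_natCast_add_atTop {α : ℝ} (hα : 0 < α) (β : ℝ) :
    Tendsto (fun r : ℕ => α * r + β) atTop atTop :=
  tendsto_atTop_add_const_right _ β (tendsto_natCast_atTop_atTop.const_mul_atTop hα)

lemma Gamma_add_le_rpow_mul_Gamma {y α : ℝ} (hy : 0 < y) (hα₀ : 0 < α) (hα₁ : α < 1) :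
    Gamma (y + α) ≤ y ^ α * Gamma y := by
  have hconv := Gamma_mul_add_mul_le_rpow_Gamma_mul_rpow_Gamma hy (by linarith : 0 < y + 1)
    (by linarith : 0 < 1 - α) hα₀ (by ring)
  have hΓ := Gamma_pos_of_pos hy
  rwa [show (1 - α) * y + α * (y + 1) = y + α by ring, Gamma_add_one hy.ne',
    mul_rpow hy.le hΓ.le, ← mul_assoc, mul_comm (Gamma y ^ (1 - α)), mul_assoc,
    ← rpow_add hΓ, sub_add_cancel, rpow_one] at hconv

lemma rpow_le_mul_Gamma_div_Gamma_add {y α : ℝ} (hy : 0 < y) (hα₀ : 0 < α) (hα₁ : α < 1) :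
    y ^ (1 - α) ≤ y * Gamma y / Gamma (y + α) := by
  have hΓ := Gamma_pos_of_pos (by linarith : 0 < y + α)
  rw [le_div_iff₀ hΓ]
  calc y ^ (1 - α) * Gamma (y + α) ≤ y ^ (1 - α) * (y ^ α * Gamma y) := by
        gcongr; exact Gamma_add_le_rpow_mul_Gamma hy hα₀ hα₁
    _ = y * Gamma y := by rw [← mul_assoc, ← rpow_add hy, sub_add_cancel, rpow_one]

lemma mul_Gamma_div_Gamma_add_le_one {y α : ℝ} (hy : 1 ≤ y) (hα : 1 ≤ α) :
    y * Gamma y / Gamma (y + α) ≤ 1 := by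
  rw [div_le_one (Gamma_pos_of_pos (by linarith)), ← Gamma_add_one (by linarith)]
  exact Gamma_strictMonoOn_Ici.monotoneOn (by simp; linarith) (by simp; linarith) (by linarith)

lemma eventually_eq_zero_or_eventually_ne_zero {M₀ : Type*} [MulZeroClass M₀] {f g : ℕ → M₀}
    (h : ∀ᶠ n in atTop, f (n + 1) = f n * g n) :
    (∀ᶠ n in atTop, f n = 0) ∨ ∀ᶠ n in atTop, f n ≠ 0 := by
  obtain ⟨N, hN⟩ := eventually_atTop.1 h
  by_cases hzero : ∃ n ≥ N, f n = 0
  · obtain ⟨n, hn, hfn⟩ := hzero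
    refine .inl (eventually_atTop.2 ⟨n, fun m hm => ?_⟩)
    induction m, hm using Nat.le_induction with
    | base => exact hfn
    | succ m hm ih => rw [hN m (hn.trans hm), ih, zero_mul]
  · push Not at hzero
    exact .inr (eventually_atTop.2 ⟨N, hzero⟩)

section TermwiseIntegration

variable {c : ℕ → ℝ} {δ x : ℝ}

lemma integral_rpow_add_natCast (hδ : -1 < δ) (hx : 0 ≤ x) (r : ℕ) :
    ∫ u in (0:ℝ)..x, u ^ (δ + r) = x ^ (δ + 1) * x ^ r / (δ + 1 + r) := by
  have hr : 0 < δ + 1 + r := by have := r.cast_nonneg (α := ℝ); linarith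
  rw [integral_rpow (.inl (by linarith)), show δ + r + 1 = δ + 1 + r by ring, zero_rpow hr.ne',
    sub_zero, rpow_add_natCast' hx hr.ne']

lemma integral_rpow_mul_tsum_of_summable (hδ : -1 < δ) (hx : 0 ≤ x)
    (hc : Summable fun r => |c r| * x ^ r) :
    ∫ u in (0:ℝ)..x, u ^ δ * ∑' r, c r * u ^ r = x ^ (δ + 1) * ∑' r, c r * x ^ r / (δ + 1 + r) := by
  have hint (r : ℕ) : IntegrableOn (fun u => c r * u ^ (δ + r)) (Set.Ioc 0 x) :=
    ((intervalIntegral.intervalIntegrable_rpow' (by linarith)).1).const_mul _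
  have hnorm (r : ℕ) : ∫ u in Set.Ioc 0 x, ‖c r * u ^ (δ + r)‖ =
      |c r| * (x ^ (δ + 1) * x ^ r / (δ + 1 + r)) := by
    rw [← integral_rpow_add_natCast hδ hx, intervalIntegral.integral_of_le hx,
      ← integral_const_mul]
    refine setIntegral_congr_fun measurableSet_Ioc fun u hu => ?_
    rw [norm_mul, norm_eq_abs, norm_of_nonneg (rpow_nonneg hu.1.le _)]
  have hsum : Summable fun r => ∫ u in Set.Ioc 0 x, ‖c r * u ^ (δ + r)‖ := by
    refine (hc.mul_left (x ^ (δ + 1) / (δ + 1))).of_nonneg_of_le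
      (fun r => integral_nonneg fun u => norm_nonneg _) fun r => ?_
    have hδ₁ : 0 < δ + 1 := by linarith
    rw [hnorm]
    calc |c r| * (x ^ (δ + 1) * x ^ r / (δ + 1 + r))
        = |c r| * x ^ r * x ^ (δ + 1) / (δ + 1 + r) := by ring
      _ ≤ |c r| * x ^ r * x ^ (δ + 1) / (δ + 1) :=
        div_le_div_of_nonneg_left (by positivity) hδ₁ (by simp)
      _ = x ^ (δ + 1) / (δ + 1) * (|c r| * x ^ r) := by ring
  rw [intervalIntegral.integral_of_le hx]
  calc ∫ u in Set.Ioc 0 x, u ^ δ * ∑' r, c r * u ^ r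
      = ∫ u in Set.Ioc 0 x, ∑' r, c r * u ^ (δ + r) := by
        refine setIntegral_congr_fun measurableSet_Ioc fun u hu => ?_
        rw [← tsum_mul_left]
        refine tsum_congr fun r => ?_
        rw [rpow_add_natCast hu.1.ne']
        ring
    _ = ∑' r, ∫ u in Set.Ioc 0 x, c r * u ^ (δ + r) :=
        (integral_tsum_of_summable_integral_norm hint hsum).symm
    _ = x ^ (δ + 1) * ∑' r, c r * x ^ r / (δ + 1 + r) := by
        rw [← tsum_mul_left]
        refine tsum_congr fun r => ?_
        rw [integral_const_mul, ← intervalIntegral.integral_of_le hx,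
          integral_rpow_add_natCast hδ hx]
        ring

lemma summable_mul_pow_of_summable_mul_pow_div {d u : ℝ} (hd : 0 < d) (hu : 0 ≤ u) (hux : u < x)
    (h : Summable fun r => c r * x ^ r / (d + r)) : Summable fun r => c r * u ^ r := by
  have hx : 0 < x := hu.trans_lt hux
  set q := u / x
  have hq₀ : 0 ≤ q := by positivity
  have hq : ‖q‖ < 1 := by rwa [norm_of_nonneg hq₀, div_lt_one hx]
  have hdom : Summable fun r : ℕ => d * q ^ r + (r : ℝ) ^ 1 * q ^ r :=
    ((summable_geometric_of_norm_lt_one hq).mul_left d).add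
      (summable_pow_mul_geometric_of_norm_lt_one 1 hq)
  refine hdom.of_norm_bounded_eventually_nat ?_
  filter_upwards [(tendsto_norm_zero.comp h.tendsto_atTop_zero).eventually_le_const zero_lt_one]
    with r hr
  have hdr : 0 < d + r := by positivity
  have hur : u ^ r = x ^ r * q ^ r := by rw [← mul_pow, mul_div_cancel₀ _ hx.ne']
  calc ‖c r * u ^ r‖ = ‖c r * x ^ r / (d + r)‖ * ((d + r) * q ^ r) := by
        rw [hur, norm_div, norm_mul, norm_mul, norm_mul, norm_of_nonneg hdr.le,
          norm_of_nonneg (pow_nonneg hq₀ r), norm_of_nonneg (pow_nonneg hx.le r)]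
        field_simp
    _ ≤ 1 * ((d + r) * q ^ r) := by gcongr; exact hr
    _ = d * q ^ r + (r : ℝ) ^ 1 * q ^ r := by ring

lemma integral_rpow_mul_tsum_of_forall_not_summable (hδ : -1 < δ) (hx : 0 < x)
    (hc : ∀ u, 0 < u → ¬ Summable fun r => c r * u ^ r) :
    ∫ u in (0:ℝ)..x, u ^ δ * ∑' r, c r * u ^ r = x ^ (δ + 1) * ∑' r, c r * x ^ r / (δ + 1 + r) := by
  have hrhs : ¬ Summable fun r => c r * x ^ r / (δ + 1 + r) := fun h =>
    hc (x / 2) (by positivity)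
      (summable_mul_pow_of_summable_mul_pow_div (by linarith) (by positivity) (by linarith) h)
  rw [tsum_eq_zero_of_not_summable hrhs, mul_zero, intervalIntegral.integral_of_le hx.le]
  refine (setIntegral_congr_fun measurableSet_Ioc fun u hu => ?_).trans (integral_zero _ _)
  rw [tsum_eq_zero_of_not_summable (hc u hu.1), mul_zero]

end TermwiseIntegration

noncomputable def hmlCoeff (α β a₁ a₂ b₁ : ℝ) (r : ℕ) : ℝ :=
  poch a₁ r * poch a₂ r / (poch b₁ r * Gamma (α * r + β))

noncomputable def hmlRatio (α β a₁ a₂ b₁ : ℝ) (r : ℕ) : ℝ :=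
  (a₁ + r) * (a₂ + r) / ((b₁ + r) * (α * r + β))

section HMLCoeff

variable {α β : ℝ} (a₁ a₂ b₁ : ℝ)

-- Holds for every `b₁`: when `(b₁)_(r+1) = 0` both sides are `0`, by the convention `x / 0 = 0`.
lemma hmlCoeff_succ {r : ℕ} (hr : 0 < α * r + β) :
    hmlCoeff α β a₁ a₂ b₁ (r + 1) = hmlCoeff α β a₁ a₂ b₁ r *
      hmlRatio α β a₁ a₂ b₁ r * ((α * r + β) * Gamma (α * r + β) / Gamma (α * r + β + α)) := by
  have hΓ := (Gamma_pos_of_pos hr).ne'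
  simp only [hmlCoeff, hmlRatio, poch_succ, Nat.cast_succ,
    show α * (r + 1) + β = α * r + β + α by ring]
  by_cases hD : poch b₁ r * (b₁ + r) * Gamma (α * r + β + α) = 0
  · rcases (by simpa only [mul_eq_zero] using hD : (poch b₁ r = 0 ∨ b₁ + r = 0) ∨ _)
      with (h | h) | h <;> simp [h]
  · obtain ⟨⟨hB, hb⟩, hΓ'⟩ : (poch b₁ r ≠ 0 ∧ b₁ + r ≠ 0) ∧ Gamma (α * r + β + α) ≠ 0 := by
      simpa only [mul_eq_zero, not_or] using hD
    rw [div_mul_div_comm, div_mul_div_comm, div_eq_div_iff hD (by simp [hB, hb, hΓ, hΓ', hr.ne'])]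
    ring

lemma tendsto_hmlRatio (hα : α ≠ 0) :
    Tendsto (hmlRatio α β a₁ a₂ b₁) atTop (𝓝 (1 / α)) := by
  have h := (tendsto_add_div_add a₁ b₁ 1 one_ne_zero).mul (tendsto_add_div_add a₂ β 1 hα)
  rw [div_one, one_mul] at h
  exact h.congr fun r => by simp only [hmlRatio, one_mul, div_mul_div_comm, add_comm β]

lemma summable_hmlCoeff_of_one_le (hα : 1 ≤ α) {x : ℝ} (hx₀ : 0 ≤ x) (hx₁ : x < 1) :
    Summable fun r => |hmlCoeff α β a₁ a₂ b₁ r| * x ^ r := by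
  have hα₀ : 0 < α := by linarith
  have hR := tendsto_hmlRatio a₁ a₂ b₁ (β := β) hα₀.ne'
  have hxR : x * (1 / α) < (1 + x) / 2 := by
    have : 1 / α ≤ 1 := by rwa [div_le_one hα₀]
    nlinarith
  refine summable_of_ratio_norm_eventually_le (by linarith : (1 + x) / 2 < 1) ?_
  filter_upwards [(hR.const_mul x).eventually_lt_const hxR, hR.eventually_const_lt (by positivity),
    (tendsto_mul_natCast_add_atTop hα₀ β).eventually_ge_atTop 1] with r hlt hpos hy
  set y := α * r + β
  have hG : y * Gamma y / Gamma (y + α) ≤ 1 := mul_Gamma_div_Gamma_add_le_one hy hα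
  have hG₀ : 0 ≤ y * Gamma y / Gamma (y + α) :=
    div_nonneg (mul_nonneg (by linarith) (Gamma_pos_of_pos (by linarith)).le)
      (Gamma_pos_of_pos (by linarith)).le
  rw [hmlCoeff_succ a₁ a₂ b₁ (by linarith), norm_of_nonneg (by positivity),
    norm_of_nonneg (by positivity), abs_mul, abs_mul, abs_of_pos hpos, abs_of_nonneg hG₀]
  calc |hmlCoeff α β a₁ a₂ b₁ r| * hmlRatio α β a₁ a₂ b₁ r *
        (y * Gamma y / Gamma (y + α)) * x ^ (r + 1)
      ≤ |hmlCoeff α β a₁ a₂ b₁ r| * hmlRatio α β a₁ a₂ b₁ r * 1 * x ^ (r + 1) := by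
        gcongr
    _ = x * hmlRatio α β a₁ a₂ b₁ r * (|hmlCoeff α β a₁ a₂ b₁ r| * x ^ r) := by
        ring
    _ ≤ (1 + x) / 2 * (|hmlCoeff α β a₁ a₂ b₁ r| * x ^ r) := by gcongr

lemma not_summable_hmlCoeff_of_lt_one (hα₀ : 0 < α) (hα₁ : α < 1)
    (hne : ∀ᶠ r in atTop, hmlCoeff α β a₁ a₂ b₁ r ≠ 0) {u : ℝ} (hu : 0 < u) :
    ¬ Summable fun r => hmlCoeff α β a₁ a₂ b₁ r * u ^ r := by
  have hR := tendsto_hmlRatio a₁ a₂ b₁ (β := β) hα₀.ne'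
  have hlin := tendsto_mul_natCast_add_atTop hα₀ β
  have hgrowth : Tendsto (fun r : ℕ => u * hmlRatio α β a₁ a₂ b₁ r * (α * r + β) ^ (1 - α))
      atTop atTop :=
    (hR.const_mul u).pos_mul_atTop (by positivity) ((tendsto_rpow_atTop (by linarith)).comp hlin)
  refine not_summable_of_ratio_norm_eventually_ge one_lt_two
    (hne.mono fun r hr => norm_ne_zero_iff.2 (mul_ne_zero hr (pow_ne_zero r hu.ne'))).frequently ?_
  filter_upwards [hgrowth.eventually_ge_atTop 2, hR.eventually_const_lt (by positivity),
    hlin.eventually_gt_atTop 0] with r h2 hpos hy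
  have hG := rpow_le_mul_Gamma_div_Gamma_add hy hα₀ hα₁
  calc 2 * ‖hmlCoeff α β a₁ a₂ b₁ r * u ^ r‖
      ≤ u * hmlRatio α β a₁ a₂ b₁ r * (α * r + β) ^ (1 - α) * ‖hmlCoeff α β a₁ a₂ b₁ r * u ^ r‖ := by
        gcongr
    _ ≤ u * hmlRatio α β a₁ a₂ b₁ r * ((α * r + β) * Gamma (α * r + β) / Gamma (α * r + β + α)) *
          ‖hmlCoeff α β a₁ a₂ b₁ r * u ^ r‖ := by gcongr
    _ = ‖hmlCoeff α β a₁ a₂ b₁ (r + 1) * u ^ (r + 1)‖ := by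
        rw [hmlCoeff_succ a₁ a₂ b₁ hy, norm_mul, norm_mul, norm_mul, norm_mul, norm_pow, norm_pow,
          norm_of_nonneg hu.le, norm_of_nonneg hpos.le,
          norm_of_nonneg ((rpow_nonneg hy.le _).trans hG)]
        ring

lemma summable_or_forall_not_summable_hmlCoeff (hα : 0 < α) {x : ℝ} (hx₀ : 0 ≤ x) (hx₁ : x < 1) :
    (Summable fun r => |hmlCoeff α β a₁ a₂ b₁ r| * x ^ r) ∨
      ∀ u, 0 < u → ¬ Summable fun r => hmlCoeff α β a₁ a₂ b₁ r * u ^ r := by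
  rcases le_or_gt 1 α with hα₁ | hα₁
  · exact .inl (summable_hmlCoeff_of_one_le a₁ a₂ b₁ hα₁ hx₀ hx₁)
  have hrec : ∀ᶠ r in atTop, hmlCoeff α β a₁ a₂ b₁ (r + 1) = hmlCoeff α β a₁ a₂ b₁ r *
      (hmlRatio α β a₁ a₂ b₁ r * ((α * r + β) * Gamma (α * r + β) / Gamma (α * r + β + α))) :=
    ((tendsto_mul_natCast_add_atTop hα β).eventually_gt_atTop 0).mono fun r hr => by
      rw [hmlCoeff_succ a₁ a₂ b₁ hr, mul_assoc]
  rcases eventually_eq_zero_or_eventually_ne_zero hrec with hzero | hne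
  · refine .inl (summable_zero.congr_cofinite ?_)
    rw [Nat.cofinite_eq_atTop]
    filter_upwards [hzero] with r hr
    simp [hr]
  · exact .inr fun u hu => not_summable_hmlCoeff_of_lt_one a₁ a₂ b₁ hα hα₁ hne hu

end HMLCoeff

theorem hml_integral_general (α β a₁ a₂ b₁ δ x : ℝ) (hα : 0 < α)
    (hδ : -1 < δ) (hx0 : 0 < x) (hx1 : x < 1) :
    ∫ u in (0:ℝ)..x,
        u ^ δ * ∑' r : ℕ,
          poch a₁ r * poch a₂ r * u ^ r / (poch b₁ r * Real.Gamma (α * r + β)) =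
      x ^ (δ + 1) / (δ + 1) *
        ∑' r : ℕ,
          poch a₁ r * poch a₂ r * poch (δ + 1) r * x ^ r /
            (poch b₁ r * poch (δ + 2) r * Real.Gamma (α * r + β)) := by
  have hδ₁ : 0 < δ + 1 := by linarith
  have hlhs (u : ℝ) (r : ℕ) : poch a₁ r * poch a₂ r * u ^ r / (poch b₁ r * Gamma (α * r + β)) =
      hmlCoeff α β a₁ a₂ b₁ r * u ^ r := (div_mul_eq_mul_div _ _ _).symm
  have hrhs (r : ℕ) : poch a₁ r * poch a₂ r * poch (δ + 1) r * x ^ r /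
      (poch b₁ r * poch (δ + 2) r * Gamma (α * r + β)) =
      (δ + 1) * (hmlCoeff α β a₁ a₂ b₁ r * x ^ r / (δ + 1 + r)) := by
    calc _ = hmlCoeff α β a₁ a₂ b₁ r * x ^ r * (poch (δ + 1) r / poch (δ + 1 + 1) r) := by
          rw [hmlCoeff, add_assoc, one_add_one_eq_two]; ring
      _ = _ := by rw [poch_div_poch_add_one hδ₁]; ring
  simp_rw [hlhs, hrhs, tsum_mul_left, ← mul_assoc, div_mul_cancel₀ _ hδ₁.ne']
  rcases summable_or_forall_not_summable_hmlCoeff a₁ a₂ b₁ (β := β) hα hx0.le hx1 with h | h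
  · exact integral_rpow_mul_tsum_of_summable hδ hx0.le h
  · exact integral_rpow_mul_tsum_of_forall_not_summable hδ hx0 h

theorem hml_integral (α β a₁ a₂ b₁ δ x : ℝ) (hα : 0 < α) (hβ : 0 < β)
    (hδ : -1 < δ) (hb : ∀ n : ℕ, b₁ ≠ -n) (hx0 : 0 < x) (hx1 : x < 1) :
    ∫ u in (0:ℝ)..x,
        u ^ δ * ∑' r : ℕ,
          poch a₁ r * poch a₂ r * u ^ r / (poch b₁ r * Real.Gamma (α * r + β)) =
      x ^ (δ + 1) / (δ + 1) *
        ∑' r : ℕ,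
          poch a₁ r * poch a₂ r * poch (δ + 1) r * x ^ r /
            (poch b₁ r * poch (δ + 2) r * Real.Gamma (α * r + β)) :=
  hml_integral_general α β a₁ a₂ b₁ δ x hα hδ hx0 hx1
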